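/- Let (X, μ) be a probability space, W a measurable space, p : W → X a measurable map, and m a finitely additive probability measure on the measurable subsets of W (so m(∅)=0, m(W)=1, m is nonnegative, and m(A ∪ B)=m(A)+m(B) for disjoint measurable A,B) satisfying m(p⁻¹(A)) = μ(A) for every measurable A ⊆ X. Then for every countable measurable partition X = ⨆_{k∈ℕ} A_k and every choice of measurable sets D_k ⊆ p⁻¹(A_k), one has m(⋃_{k∈ℕ} D_k) = ∑_{k∈ℕ} m(D_k). -/

import Mathlib

open MeasureTheory Filter Topology

/-! The tail `⋃ k ≥ n, D k` lies in `p⁻¹(⋃ k ≥ n, A k)`, whose `m`-mass is the `μ`-mass of the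
tail of a disjoint sequence and hence tends to `0` by countable additivity of `μ`. Finite
additivity of `m` splits `m (⋃ k, D k)` into the `n`-th partial sum plus the `m`-mass of that
tail, so the partial sums converge to `m (⋃ k, D k)`. -/

structure IsFinitelyAdditiveMeasure {W : Type*} [MeasurableSpace W] (m : Set W → ℝ) : Prop where
  empty : m ∅ = 0
  nonneg : ∀ A, MeasurableSet A → 0 ≤ m A
  union : ∀ A B, MeasurableSet A → MeasurableSet B → Disjoint A B → m (A ∪ B) = m A + m B

namespace IsFinitelyAdditiveMeasure

variable {W : Type*} [MeasurableSpace W] {m : Set W → ℝ}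

theorem mono (hm : IsFinitelyAdditiveMeasure m) {B C : Set W} (hB : MeasurableSet B)
    (hC : MeasurableSet C) (hBC : B ⊆ C) : m B ≤ m C := by
  have hsplit : m C = m B + m (C \ B) := by
    conv_lhs => rw [← Set.union_sdiff_cancel hBC]
    exact hm.union B (C \ B) hB (hC.diff hB) Set.disjoint_sdiff_right
  linarith [hm.nonneg (C \ B) (hC.diff hB)]

theorem biUnion_finset {ι : Type*} (hm : IsFinitelyAdditiveMeasure m) {D : ι → Set W}
    (hD : ∀ i, MeasurableSet (D i)) (hD_disj : Pairwise (Function.onFun Disjoint D))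
    (s : Finset ι) : m (⋃ i ∈ s, D i) = ∑ i ∈ s, m (D i) := by
  classical
  induction s using Finset.induction_on with
  | empty => simpa using hm.empty
  | insert a s ha ih =>
    rw [Finset.set_biUnion_insert, Finset.sum_insert ha, ← ih]
    refine hm.union _ _ (hD a) (Finset.measurableSet_biUnion s fun i _ => hD i) ?_
    exact Set.disjoint_iUnion₂_right.mpr fun i hi => hD_disj fun h => ha (h ▸ hi)

theorem iUnion_eq_sum_range_add_tail (hm : IsFinitelyAdditiveMeasure m) {D : ℕ → Set W}
    (hD : ∀ k, MeasurableSet (D k)) (hD_disj : Pairwise (Function.onFun Disjoint D)) (n : ℕ) :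
    m (⋃ k, D k) = ∑ k ∈ Finset.range n, m (D k) + m (⋃ k ≥ n, D k) := by
  have hsplit : ⋃ k, D k = (⋃ k ∈ Finset.range n, D k) ∪ ⋃ k ≥ n, D k := by
    ext w
    simp only [Set.mem_iUnion, Set.mem_union, Finset.mem_range, exists_prop]
    grind
  rw [hsplit, hm.union _ _ (Finset.measurableSet_biUnion _ fun k _ => hD k)
    (.iUnion fun k => .iUnion fun _ => hD k), hm.biUnion_finset hD hD_disj]
  simp only [Finset.mem_range, Set.disjoint_iUnion_left, Set.disjoint_iUnion_right]
  exact fun i hi j hj => hD_disj (by omega)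

theorem hasSum_iUnion_of_tendsto_tail (hm : IsFinitelyAdditiveMeasure m) {D : ℕ → Set W}
    (hD : ∀ k, MeasurableSet (D k)) (hD_disj : Pairwise (Function.onFun Disjoint D))
    (h_tail : Tendsto (fun n => m (⋃ k ≥ n, D k)) atTop (𝓝 0)) :
    HasSum (fun k => m (D k)) (m (⋃ k, D k)) := by
  refine (hasSum_iff_tendsto_nat_of_nonneg (fun k => hm.nonneg _ (hD k)) _).mpr ?_
  have hpartial : ∀ n, ∑ k ∈ Finset.range n, m (D k) = m (⋃ k, D k) - m (⋃ k ≥ n, D k) :=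
    fun n => by rw [hm.iUnion_eq_sum_range_add_tail hD hD_disj n]; ring
  simpa only [hpartial, sub_zero] using tendsto_const_nhds.sub h_tail

end IsFinitelyAdditiveMeasure

theorem equidistributed_mean_countably_additive_along_partition_general
    {X W : Type*} [MeasurableSpace X] [MeasurableSpace W]
    (μ : Measure X) [IsProbabilityMeasure μ]
    (p : W → X) (hp : Measurable p)
    (m : Set W → ℝ)
    (h_empty : m ∅ = 0)
    (h_nonneg : ∀ A : Set W, MeasurableSet A → 0 ≤ m A)
    (h_add : ∀ A B : Set W, MeasurableSet A → MeasurableSet B → Disjoint A B →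
      m (A ∪ B) = m A + m B)
    (h_equi : ∀ A : Set X, MeasurableSet A → m (p ⁻¹' A) = (μ A).toReal)
    (A : ℕ → Set X) (hA : ∀ k, MeasurableSet (A k))
    (hA_disj : Pairwise (Function.onFun Disjoint A))
    (D : ℕ → Set W) (hD : ∀ k, MeasurableSet (D k))
    (hD_sub : ∀ k, D k ⊆ p ⁻¹' (A k)) :
    HasSum (fun k => m (D k)) (m (⋃ k, D k)) := by
  have hm : IsFinitelyAdditiveMeasure m := ⟨h_empty, h_nonneg, h_add⟩
  have hD_disj : Pairwise (Function.onFun Disjoint D) := fun i j hij =>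
    ((hA_disj hij).preimage p).mono (hD_sub i) (hD_sub j)
  have hA_tail : ∀ n, MeasurableSet (⋃ k ≥ n, A k) := fun n =>
    .iUnion fun k => .iUnion fun _ => hA k
  have hD_tail : ∀ n, MeasurableSet (⋃ k ≥ n, D k) := fun n =>
    .iUnion fun k => .iUnion fun _ => hD k
  have hμ_tail : Tendsto (fun n => (μ (⋃ k ≥ n, A k)).toReal) atTop (𝓝 0) := by
    simpa [Function.comp_def] using (ENNReal.tendsto_toReal ENNReal.zero_ne_top).comp
      (tendsto_measure_biUnion_Ici_zero_of_pairwise_disjoint (μ := μ)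
        (fun k => (hA k).nullMeasurableSet) hA_disj)
  have hm_tail_le : ∀ n, m (⋃ k ≥ n, D k) ≤ (μ (⋃ k ≥ n, A k)).toReal := fun n => by
    rw [← h_equi _ (hA_tail n)]
    refine hm.mono (hD_tail n) (hp (hA_tail n)) ?_
    simpa only [Set.preimage_iUnion] using Set.iUnion₂_mono fun k _ => hD_sub k
  exact hm.hasSum_iUnion_of_tendsto_tail hD hD_disj
    (squeeze_zero (fun n => hm.nonneg _ (hD_tail n)) hm_tail_le hμ_tail)

/-- If `m` is a finitely additive probability measure on the measurable subsets of `W` with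
`m (p⁻¹ A) = μ A` for all measurable `A ⊆ X`, then for every countable measurable partition
`X = ⨆ₖ Aₖ` and every choice of measurable sets `Dₖ ⊆ p⁻¹(Aₖ)`, one has
`m (⋃ₖ Dₖ) = ∑ₖ m (Dₖ)`. -/
theorem equidistributed_mean_countably_additive_along_partition
    {X W : Type*} [MeasurableSpace X] [MeasurableSpace W]
    (μ : Measure X) [IsProbabilityMeasure μ]
    (p : W → X) (hp : Measurable p)
    (m : Set W → ℝ)
    (h_empty : m ∅ = 0)
    (h_univ : m Set.univ = 1)
    (h_nonneg : ∀ A : Set W, MeasurableSet A → 0 ≤ m A)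
    (h_add : ∀ A B : Set W, MeasurableSet A → MeasurableSet B → Disjoint A B →
      m (A ∪ B) = m A + m B)
    (h_equi : ∀ A : Set X, MeasurableSet A → m (p ⁻¹' A) = (μ A).toReal)
    (A : ℕ → Set X) (hA : ∀ k, MeasurableSet (A k))
    (hA_disj : Pairwise (Function.onFun Disjoint A)) (hA_cover : (⋃ k, A k) = Set.univ)
    (D : ℕ → Set W) (hD : ∀ k, MeasurableSet (D k))
    (hD_sub : ∀ k, D k ⊆ p ⁻¹' (A k)) :
    HasSum (fun k => m (D k)) (m (⋃ k, D k)) :=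
  equidistributed_mean_countably_additive_along_partition_general μ p hp m h_empty h_nonneg h_add
    h_equi A hA hA_disj D hD hD_sub
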